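/- Let (W,S) be the Coxeter system with S = {s_1, s_2, s_3} and m_{s_1s_2} = 3, m_{s_2s_3} = ∞, m_{s_1s_3} = 2, and let V = ℂu_0 ⊕ ⊕_{i≥1}(ℂu_i ⊕ ℂv_i) be the representation of W given by the Section 5 construction. Then V is an irreducible representation of W of infinite dimension: the only W-invariant linear subspaces of V are 0 and V, and V is not finite dimensional. -/

import Mathlib

/-- The Coxeter matrix with `S = {s₁, s₂, s₃}` (indexed by `Fin 3`), `m_{s₁s₂} = 3`,
`m_{s₂s₃} = ∞` (encoded as `0` in Mathlib) and `m_{s₁s₃} = 2`. -/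
def sec5Matrix : CoxeterMatrix (Fin 3) where
  M := !![1, 3, 2; 3, 1, 0; 2, 0, 1]
  off_diagonal i i' h := by fin_cases i <;> fin_cases i' <;> simp_all

/-- The Section 5 operators on basis vectors.  The basis of
`V = ℂu₀ ⊕ ⊕_{i ≥ 1} (ℂuᵢ ⊕ ℂvᵢ)` is indexed by `ℕ ⊕ ℕ`, with `Sum.inl i ↦ uᵢ` (`i ≥ 0`) and
`Sum.inr j ↦ v_{j+1}` (`j ≥ 0`).  The formulas are: `s₁·uᵢ = uᵢ`, `s₁·vᵢ = −vᵢ`;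
`s₂·u₀ = u₀`, `s₂·uᵢ = (3vᵢ − uᵢ)/2` and `s₂·vᵢ = (uᵢ + vᵢ)/2` for `i ≥ 1`;
`s₃·u_{2k} = u_{2k+1}`, `s₃·u_{2k+1} = u_{2k}`, `s₃·v_{2k−1} = v_{2k}`, `s₃·v_{2k} = v_{2k−1}`
(which on indices `Sum.inl i`, resp. `v_{j+1} = Sum.inr j`, is
`n ↦ n + 1` for `n` even and `n ↦ n − 1` for `n` odd). -/
noncomputable def sec5Basis (s : Fin 3) (x : ℕ ⊕ ℕ) : (ℕ ⊕ ℕ) →₀ ℂ :=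
  if s = 0 then
    match x with
    | Sum.inl i => Finsupp.single (Sum.inl i) 1
    | Sum.inr j => -Finsupp.single (Sum.inr j) 1
  else if s = 1 then
    match x with
    | Sum.inl 0 => Finsupp.single (Sum.inl 0) 1
    | Sum.inl (i + 1) => ((3 : ℂ) / 2) • Finsupp.single (Sum.inr i) 1 -
        ((1 : ℂ) / 2) • Finsupp.single (Sum.inl (i + 1)) 1
    | Sum.inr j => ((1 : ℂ) / 2) • Finsupp.single (Sum.inl (j + 1)) 1 +
        ((1 : ℂ) / 2) • Finsupp.single (Sum.inr j) 1
  else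
    match x with
    | Sum.inl i => Finsupp.single (Sum.inl (if Even i then i + 1 else i - 1)) 1
    | Sum.inr j => Finsupp.single (Sum.inr (if Even j then j + 1 else j - 1)) 1

/-- The Section 5 operators, as linear endomorphisms of `V = (ℕ ⊕ ℕ) →₀ ℂ`. -/
noncomputable def sec5Act (s : Fin 3) : ((ℕ ⊕ ℕ) →₀ ℂ) →ₗ[ℂ] ((ℕ ⊕ ℕ) →₀ ℂ) :=
  Finsupp.lift _ ℂ _ (sec5Basis s)

/-!
The basis vectors lie on a path u₀ – u₁ – v₁ – v₂ – u₂ – u₃ – v₃ – v₄ – u₄ – ⋯ whose edges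
`{u_{2k}, u_{2k+1}}`, `{v_{2k-1}, v_{2k}}` are swapped by s₃ and whose edges `{uᵢ, vᵢ}` span planes
on which s₂ acts by a matrix with nonzero off-diagonal entries. Hence, for an invariant subspace
`U`, both "`U` contains the basis vector" and "some element of `U` has a nonzero coordinate
there" propagate along every edge in both directions. Moreover `(1 + s₁)(1 + 2 s₂)(1 + s₁)` is
twelve times the coordinate projection onto `ℂu₀`. So a nonzero `U` has an element with nonzero
`u₀`-coordinate, contains `u₀`, and then contains every basis vector.
-/

open Finsupp Sum

theorem sec5Act_zero_apply_inl (x : (ℕ ⊕ ℕ) →₀ ℂ) (i : ℕ) :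
    sec5Act 0 x (inl i) = x (inl i) := by
  induction x using Finsupp.induction_linear with
  | zero => simp
  | add f g hf hg => simp [hf, hg]
  | single p c => rcases p with _ | _ <;> simp [sec5Act, sec5Basis, single_apply]

theorem sec5Act_zero_apply_inr (x : (ℕ ⊕ ℕ) →₀ ℂ) (j : ℕ) :
    sec5Act 0 x (inr j) = -x (inr j) := by
  induction x using Finsupp.induction_linear with
  | zero => simp
  | add f g hf hg => simp [hf, hg]; ring
  | single p c => rcases p with _ | _ <;> simp [sec5Act, sec5Basis, single_apply]

theorem sec5Act_one_apply_inl_zero (x : (ℕ ⊕ ℕ) →₀ ℂ) :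
    sec5Act 1 x (inl 0) = x (inl 0) := by
  induction x using Finsupp.induction_linear with
  | zero => simp
  | add f g hf hg => simp [hf, hg]
  | single p c => rcases p with (_ | _) | _ <;> simp [sec5Act, sec5Basis]

theorem sec5Act_one_apply_inl_succ (x : (ℕ ⊕ ℕ) →₀ ℂ) (i : ℕ) :
    sec5Act 1 x (inl (i + 1)) = 1 / 2 * x (inr i) + -1 / 2 * x (inl (i + 1)) := by
  induction x using Finsupp.induction_linear with
  | zero => simp
  | add f g hf hg => simp only [map_add, Finsupp.add_apply, hf, hg]; ring
  | single p c =>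
    rcases p with (_ | _) | _ <;> simp [sec5Act, sec5Basis, single_apply] <;> split_ifs <;> ring

theorem sec5Act_one_apply_inr (x : (ℕ ⊕ ℕ) →₀ ℂ) (j : ℕ) :
    sec5Act 1 x (inr j) = 3 / 2 * x (inl (j + 1)) + 1 / 2 * x (inr j) := by
  induction x using Finsupp.induction_linear with
  | zero => simp
  | add f g hf hg => simp only [map_add, Finsupp.add_apply, hf, hg]; ring
  | single p c =>
    rcases p with (_ | _) | _ <;> simp [sec5Act, sec5Basis, single_apply] <;> split_ifs <;> ring

theorem sec5Act_one_single_inl_succ (i : ℕ) :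
    sec5Act 1 (single (inl (i + 1)) 1) =
      (3 / 2 : ℂ) • single (inr i) 1 + (-1 / 2 : ℂ) • single (inl (i + 1)) 1 := by
  simp [sec5Act, sec5Basis, sub_eq_add_neg, neg_div]

theorem sec5Act_one_single_inr (j : ℕ) :
    sec5Act 1 (single (inr j) 1) =
      (1 / 2 : ℂ) • single (inl (j + 1)) 1 + (1 / 2 : ℂ) • single (inr j) 1 := by
  simp [sec5Act, sec5Basis]

def pairSwap (n : ℕ) : ℕ := if Even n then n + 1 else n - 1

@[simp] theorem pairSwap_two_mul (k : ℕ) : pairSwap (2 * k) = 2 * k + 1 := by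
  simp [pairSwap]

@[simp] theorem pairSwap_two_mul_add_one (k : ℕ) : pairSwap (2 * k + 1) = 2 * k := by
  simp [pairSwap]

theorem pairSwap_involutive : Function.Involutive pairSwap := by
  intro n
  rcases n.even_or_odd' with ⟨k, rfl | rfl⟩ <;> simp

theorem sum_map_pairSwap_involutive : Function.Involutive (Sum.map pairSwap pairSwap) := by
  rintro (i | j) <;> simp [pairSwap_involutive _]

theorem sec5Act_two_eq : sec5Act 2 = lmapDomain ℂ ℂ (Sum.map pairSwap pairSwap) := by
  refine lhom_ext fun p c => ?_
  rcases p with _ | _ <;> simp [sec5Act, sec5Basis, pairSwap]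

theorem sec5Act_two_apply (x : (ℕ ⊕ ℕ) →₀ ℂ) (p : ℕ ⊕ ℕ) :
    sec5Act 2 x p = x (Sum.map pairSwap pairSwap p) := by
  conv_lhs => rw [← sum_map_pairSwap_involutive p]
  rw [sec5Act_two_eq, lmapDomain_apply, mapDomain_apply sum_map_pairSwap_involutive.injective]

theorem sec5Act_two_single (p : ℕ ⊕ ℕ) (c : ℂ) :
    sec5Act 2 (single p c) = single (Sum.map pairSwap pairSwap p) c := by
  rw [sec5Act_two_eq, lmapDomain_apply, mapDomain_single]

namespace Submodule

theorem single_mem_of_apply_single_eq {K α : Type*} [Field K] {U : Submodule K (α →₀ K)}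
    {T : Module.End K (α →₀ K)} (hT : U ∈ T.invtSubmodule) {p q : α} {a b : K} (ha : a ≠ 0)
    (hTp : T (single p 1) = a • single q 1 + b • single p 1) (hp : single p 1 ∈ U) :
    single q 1 ∈ U := by
  have : single q 1 = a⁻¹ • (T (single p 1) - b • single p 1) := by
    rw [hTp, add_sub_cancel_right, smul_smul, inv_mul_cancel₀ ha, one_smul]
  rw [this]
  exact U.smul_mem _ (U.sub_mem (hT hp) (U.smul_mem _ hp))

theorem exists_apply_ne_zero_of_apply_eq {R α : Type*} [Semiring R] [NoZeroDivisors R]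
    {U : Submodule R (α →₀ R)} {T : Module.End R (α →₀ R)} (hT : U ∈ T.invtSubmodule)
    {p q : α} {a b : R} (ha : a ≠ 0) (hTq : ∀ x, T x q = a * x p + b * x q)
    (hp : ∃ x ∈ U, x p ≠ 0) : ∃ x ∈ U, x q ≠ 0 := by
  obtain ⟨x, hxU, hxp⟩ := hp
  by_cases hxq : x q = 0
  · exact ⟨T x, hT hxU, by simp [hTq, hxq, ha, hxp]⟩
  · exact ⟨x, hxU, hxq⟩

end Submodule

theorem forall_of_pairSwap_of_shift_iff {P : ℕ ⊕ ℕ → Prop}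
    (hswap : ∀ p, P p → P (Sum.map pairSwap pairSwap p))
    (hshift : ∀ j, P (inl (j + 1)) ↔ P (inr j)) {p : ℕ ⊕ ℕ} (hp : P p) (q : ℕ ⊕ ℕ) : P q := by
  have hswap' : ∀ p, P (Sum.map pairSwap pairSwap p) ↔ P p := fun p =>
    ⟨fun h => (sum_map_pairSwap_involutive p) ▸ hswap _ h, hswap p⟩
  have heven : ∀ k, P (inl (2 * k)) ↔ P (inl 0) := by
    intro k
    induction k with
    | zero => rfl
    | succ k ih =>
      calc P (inl (2 * (k + 1))) ↔ P (inr (2 * k + 1)) := hshift (2 * k + 1)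
        _ ↔ P (inr (2 * k)) := by simpa using hswap' (inr (2 * k))
        _ ↔ P (inl (2 * k + 1)) := (hshift (2 * k)).symm
        _ ↔ P (inl (2 * k)) := by simpa using hswap' (inl (2 * k))
        _ ↔ P (inl 0) := ih
  have hinl : ∀ i, P (inl i) ↔ P (inl 0) := by
    intro i
    rcases i.even_or_odd' with ⟨k, rfl | rfl⟩
    · exact heven k
    · calc P (inl (2 * k + 1)) ↔ P (inl (2 * k)) := by simpa using hswap' (inl (2 * k))
        _ ↔ P (inl 0) := heven k
  have hall : ∀ q, P q ↔ P (inl 0) := by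
    rintro (i | j)
    · exact hinl i
    · exact (hshift j).symm.trans (hinl (j + 1))
  exact (hall q).2 ((hall p).1 hp)

/-- On each plane `⟨u_{i+1}, v_{i+1}⟩`, `(1 + s₁) / 2` is the projection onto `ℂu_{i+1}` and
compresses `s₂` to `-1/2`, while all three operators fix `u₀`. -/
theorem sec5Act_extract_inl_zero_apply (x : (ℕ ⊕ ℕ) →₀ ℂ) :
    ((1 + sec5Act 0) * (1 + 2 • sec5Act 1) * (1 + sec5Act 0) : Module.End ℂ _) x =
      (12 * x (inl 0)) • single (inl 0) 1 := by
  ext ((_ | i) | j) <;>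
    simp [sec5Act_zero_apply_inl, sec5Act_zero_apply_inr, sec5Act_one_apply_inl_zero,
      sec5Act_one_apply_inl_succ, sec5Act_one_apply_inr] <;> ring

section Invariant

variable {U : Submodule ℂ ((ℕ ⊕ ℕ) →₀ ℂ)}

theorem single_mem_of_invtSubmodule_sec5Act
    (hU : ∀ s, U ∈ Module.End.invtSubmodule (sec5Act s)) {p : ℕ ⊕ ℕ} (hp : single p 1 ∈ U)
    (q : ℕ ⊕ ℕ) : single q 1 ∈ U := by
  refine forall_of_pairSwap_of_shift_iff (P := fun p => single p 1 ∈ U) (fun p hp => ?_)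
    (fun j => ?_) hp q
  · simpa [sec5Act_two_single] using hU 2 hp
  · exact ⟨Submodule.single_mem_of_apply_single_eq (hU 1) (by norm_num)
        (sec5Act_one_single_inl_succ j),
      Submodule.single_mem_of_apply_single_eq (hU 1) (by norm_num) (sec5Act_one_single_inr j)⟩

theorem exists_apply_ne_zero_of_invtSubmodule_sec5Act
    (hU : ∀ s, U ∈ Module.End.invtSubmodule (sec5Act s)) {p : ℕ ⊕ ℕ} (hp : ∃ x ∈ U, x p ≠ 0)
    (q : ℕ ⊕ ℕ) : ∃ x ∈ U, x q ≠ 0 := by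
  refine forall_of_pairSwap_of_shift_iff (P := fun p => ∃ x ∈ U, x p ≠ 0)
    (fun p ⟨x, hxU, hxp⟩ => ?_) (fun j => ?_) hp q
  · refine ⟨sec5Act 2 x, hU 2 hxU, ?_⟩
    rwa [sec5Act_two_apply, sum_map_pairSwap_involutive]
  · exact ⟨Submodule.exists_apply_ne_zero_of_apply_eq (hU 1) (by norm_num)
        (sec5Act_one_apply_inr · j),
      Submodule.exists_apply_ne_zero_of_apply_eq (hU 1) (by norm_num)
        (sec5Act_one_apply_inl_succ · j)⟩

theorem single_inl_zero_mem_of_invtSubmodule_sec5Act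
    (hU : ∀ s, U ∈ Module.End.invtSubmodule (sec5Act s)) (hx : ∃ x ∈ U, x (inl 0) ≠ 0) :
    single (inl 0) 1 ∈ U := by
  obtain ⟨x, hxU, hx0⟩ := hx
  open Module.End in
  have hE : U ∈ invtSubmodule ((1 + sec5Act 0) * (1 + 2 • sec5Act 1) * (1 + sec5Act 0)) := by
    have h0 : U ∈ invtSubmodule (1 + sec5Act 0) :=
      invtSubmodule_inf_invtSubmodule_le_invtSubmodule_add _ _ ⟨by simp, hU 0⟩
    have h1 : U ∈ invtSubmodule (1 + 2 • sec5Act 1) :=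
      invtSubmodule_inf_invtSubmodule_le_invtSubmodule_add _ _
        ⟨by simp, invtSubmodule_le_invtSubmodule_smul _ (2 : ℕ) (hU 1)⟩
    exact invtSubmodule.comp _ (invtSubmodule.comp _ h0 h1) h0
  have h12 : (12 * x (inl 0)) ≠ 0 := mul_ne_zero (by norm_num) hx0
  have := U.smul_mem (12 * x (inl 0))⁻¹ (hE hxU)
  rwa [sec5Act_extract_inl_zero_apply, smul_smul, inv_mul_cancel₀ h12, one_smul] at this

end Invariant

/-- the Section 5 representation `V = ℂu₀ ⊕ ⊕_{i ≥ 1}(ℂuᵢ ⊕ ℂvᵢ)` of the Coxeter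
group `W` of the system with `m_{s₁s₂} = 3`, `m_{s₂s₃} = ∞`, `m_{s₁s₃} = 2` is irreducible and
of infinite dimension: its only `W`-invariant subspaces are `0` and `V`, and `V` is not finite
dimensional. -/
theorem statement11 {W : Type*} [Group W] (cs : CoxeterSystem sec5Matrix W)
    (ρ : Representation ℂ W ((ℕ ⊕ ℕ) →₀ ℂ))
    (hρ : ∀ s : Fin 3, ρ (cs.simple s) = sec5Act s) :
    (¬ Module.Finite ℂ ((ℕ ⊕ ℕ) →₀ ℂ)) ∧
    ∀ U : Submodule ℂ ((ℕ ⊕ ℕ) →₀ ℂ), (∀ w : W, ∀ v ∈ U, ρ w v ∈ U) → U = ⊥ ∨ U = ⊤ := by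
  refine ⟨fun _ => ?_, fun U hU => ?_⟩
  · exact (Module.Finite.finite_basis (Finsupp.basisSingleOne (R := ℂ) (ι := ℕ ⊕ ℕ))).false
  have hU' : ∀ s, U ∈ Module.End.invtSubmodule (sec5Act s) := fun s x hx => by
    simpa [hρ] using hU (cs.simple s) x hx
  rcases eq_or_ne U ⊥ with hbot | hne
  · exact Or.inl hbot
  obtain ⟨x, hxU, hx0⟩ := (Submodule.ne_bot_iff U).1 hne
  obtain ⟨p, hp⟩ : ∃ p, x p ≠ 0 := Finsupp.ne_iff.1 hx0
  have hu0 : single (inl 0) 1 ∈ U := single_inl_zero_mem_of_invtSubmodule_sec5Act hU'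
    (exists_apply_ne_zero_of_invtSubmodule_sec5Act hU' ⟨x, hxU, hp⟩ (inl 0))
  refine Or.inr (eq_top_iff.2 ?_)
  rw [← (Finsupp.basisSingleOne (R := ℂ)).span_eq, Submodule.span_le]
  rintro _ ⟨q, rfl⟩
  simpa using single_mem_of_invtSubmodule_sec5Act hU' hu0 q
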